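/- For μ ∈ Γ_{k−1} ⊂ ℝⁿ and each i, the partial derivative ∂/∂μ_i of the quotient σ_k(μ)/σ_{k−1}(μ) equals (σ_{k−1}(μ|i)σ_{k−1}(μ) − σ_k(μ)σ_{k−2}(μ|i))/σ_{k−1}(μ)², and this is nonnegative; hence μ ↦ σ_k(μ)/σ_{k−1}(μ) is monotone nondecreasing in each variable on Γ_{k−1}. -/

import Mathlib

/-!
Write `A, B, D` for `σ_k, σ_{k-1}, σ_{k-2}` of `(μ|i)`. Along the `i`-th coordinate
`σ_k(μ) = A + μ_i B` and `σ_{k-1}(μ) = B + μ_i D`, so the quotient is a Möbius function of `μ_i`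
whose derivative has numerator `B ^ 2 - A D`, nonnegative by Newton's inequality for the real
numbers `(μ|i)`.

Newton's inequality is proved in its normalized form by induction on the number of entries:
replacing the roots of `∏ (X + r)` by those of its derivative keeps them real (Rolle) and keeps the
normalized elementary symmetric functions. This reduces to `j + 2` entries, a case handled by
induction on `j`: splitting off one entry leaves a sum of a square and the previous case.
-/

open Finset

/-- The k-th elementary symmetric polynomial of x : Fin n -> R. -/
noncomputable def esymm (n k : ℕ) (x : Fin n → ℝ) : ℝ :=
  ∑ s ∈ Finset.univ.powersetCard k, ∏ i ∈ s, x i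

/-- The Garding cone Gamma_k. -/
def Gamma (n k : ℕ) : Set (Fin n → ℝ) :=
  {x | ∀ j, 1 ≤ j → j ≤ k → 0 < esymm n j x}

/-- The k-th elementary symmetric polynomial of x with the i-th entry deleted. -/
noncomputable def esymmDel (n k : ℕ) (x : Fin n → ℝ) (i : Fin n) : ℝ :=
  ∑ s ∈ (Finset.univ.erase i).powersetCard k, ∏ j ∈ s, x j

/-- Partial derivative of f in the i-th coordinate direction at mu. -/
noncomputable def pdv (n : ℕ) (i : Fin n) (f : (Fin n → ℝ) → ℝ) (μ : Fin n → ℝ) : ℝ :=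
  deriv (fun s => f (Function.update μ i s)) (μ i)

namespace Multiset

variable {R : Type*} [CommSemiring R]

theorem esymm_zero (s : Multiset R) : s.esymm 0 = 1 := by
  simp [esymm]

theorem esymm_cons_succ (a : R) (s : Multiset R) (k : ℕ) :
    (a ::ₘ s).esymm (k + 1) = s.esymm (k + 1) + a * s.esymm k := by
  simp only [esymm, powersetCard_cons, map_add, sum_add, map_map, Function.comp_def, prod_cons,
    sum_map_mul_left]

theorem esymm_eq_zero_of_card_lt (s : Multiset R) {k : ℕ} (h : card s < k) : s.esymm k = 0 := by
  simp [esymm, powersetCard_eq_empty _ h]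

theorem two_mul_esymm_add_two_mul_esymm_le_of_card (s : Multiset ℝ) (j : ℕ) (hs : card s = j + 2) :
    2 * (j + 2) * s.esymm (j + 2) * s.esymm j ≤ (j + 1) * s.esymm (j + 1) ^ 2 := by
  induction j generalizing s with
  | zero =>
    obtain ⟨a, c, rfl⟩ := card_eq_two.mp hs
    simp only [zero_add, insert_eq_cons, esymm_pair_two, esymm_pair_one, esymm_zero, Nat.cast_zero]
    nlinarith [sq_nonneg (a - c)]
  | succ j ih =>
    obtain ⟨a, ha⟩ := card_pos_iff_exists_mem.mp (by omega : 0 < card s)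
    obtain ⟨t, rfl⟩ := exists_cons_of_mem ha
    have ht : card t = j + 2 := by simpa using hs
    have ih := ih t ht
    rw [esymm_cons_succ, esymm_cons_succ, esymm_cons_succ, esymm_eq_zero_of_card_lt t (by omega),
      zero_add]
    push_cast
    set e₂ := t.esymm (j + 2)
    set e₁ := t.esymm (j + 1)
    set e₀ := t.esymm j
    have hsos : (j + 2 : ℝ) * ((j + 2) * (e₂ + a * e₁) ^ 2 - 2 * (j + 3) * (a * e₂) * (e₁ + a * e₀))
        = ((j + 2) * e₂ - a * e₁) ^ 2
          + (j + 3) * a ^ 2 * ((j + 1) * e₁ ^ 2 - 2 * (j + 2) * e₂ * e₀) := by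
      ring
    have hnonneg : 0 ≤ (j + 2 : ℝ) *
        ((j + 2) * (e₂ + a * e₁) ^ 2 - 2 * (j + 3) * (a * e₂) * (e₁ + a * e₀)) := by
      rw [hsos]
      exact add_nonneg (sq_nonneg _) (mul_nonneg (by positivity) (sub_nonneg.2 ih))
    nlinarith [hnonneg]

open Polynomial in
/-- `t` is the multiset of negated roots of the derivative of `∏ r ∈ s, (X + r)`; by Rolle it has
all `m` of them real. -/
theorem exists_esymm_eq_of_card_eq_succ (s : Multiset ℝ) (m : ℕ) (hs : card s = m + 1) :
    ∃ t : Multiset ℝ, card t = m ∧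
      ∀ l ≤ m, (m + 1 : ℝ) * t.esymm l = (m + 1 - l) * s.esymm l := by
  set P : ℝ[X] := ((s.map Neg.neg).map fun r => X - C r).prod
  have hsneg : card (s.map Neg.neg) = m + 1 := by rw [card_map, hs]
  have hPdeg : P.natDegree = m + 1 := by rw [natDegree_multiset_prod_X_sub_C_eq_card, hsneg]
  have hProots : card P.roots = m + 1 := by rw [roots_multiset_prod_X_sub_C, hsneg]
  have hPcoeff : ∀ j ≤ m + 1, P.coeff j = s.esymm (m + 1 - j) := fun j hj => by
    rw [prod_X_sub_C_coeff _ (hsneg ▸ hj), hsneg, esymm_neg, ← mul_assoc, ← mul_pow]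
    norm_num
  set Q := derivative P
  have hQcoeff : ∀ j ≤ m, Q.coeff j = (j + 1) * s.esymm (m - j) := fun j hj => by
    rw [coeff_derivative, hPcoeff (j + 1) (by omega), mul_comm, Nat.add_sub_add_right]
  have hQtop : Q.coeff m = m + 1 := by
    rw [hQcoeff m le_rfl, Nat.sub_self, esymm_zero, mul_one]
  have hQdeg : Q.natDegree = m :=
    le_antisymm ((natDegree_derivative_le P).trans (by omega))
      (le_natDegree_of_ne_zero (by rw [hQtop]; positivity))
  have hQroots : card Q.roots = m := by
    have hrolle : card P.roots ≤ card Q.roots + 1 := card_roots_le_derivative P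
    exact le_antisymm (hQdeg ▸ card_roots' Q) (by omega)
  refine ⟨Q.roots.map Neg.neg, by rw [card_map, hQroots], fun l hl => ?_⟩
  have hvieta := coeff_eq_esymm_roots_of_card (hQroots.trans hQdeg.symm) (k := m - l) (by omega)
  rw [leadingCoeff, hQdeg, hQtop, hQcoeff _ (Nat.sub_le m l), Nat.sub_sub_self hl,
    Nat.cast_sub hl] at hvieta
  rw [esymm_neg]
  linear_combination -hvieta

/-- Newton's inequality `q (j + 2) * q j ≤ q (j + 1) ^ 2` for the normalized
`q l = s.esymm l / (card s).choose l`, with the binomial coefficients cleared. -/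
theorem mul_esymm_add_two_mul_esymm_le (s : Multiset ℝ) (j d : ℕ) (hs : card s = j + 2 + d) :
    (j + 2) * (d + 2) * s.esymm (j + 2) * s.esymm j ≤ (j + 1) * (d + 1) * s.esymm (j + 1) ^ 2 := by
  induction d generalizing s with
  | zero =>
    have h := two_mul_esymm_add_two_mul_esymm_le_of_card s j hs
    push_cast
    linarith
  | succ d ih =>
    obtain ⟨t, ht, hrel⟩ := exists_esymm_eq_of_card_eq_succ s (j + 2 + d) (by rw [hs]; ring)
    have h₂ := hrel (j + 2) (by omega)
    have h₁ := hrel (j + 1) (by omega)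
    have h₀ := hrel j (by omega)
    have ih := ih t ht
    push_cast at h₂ h₁ h₀ ⊢
    set M : ℝ := j + 2 + d + 1
    have hL : (d + 1) * (d + 2) * ((j + 2) * (d + 1 + 2) * s.esymm (j + 2) * s.esymm j)
        = M ^ 2 * ((j + 2) * (d + 2) * t.esymm (j + 2) * t.esymm j) := by
      linear_combination
        (-(j + 2) * (d + 2) : ℝ) * (M * t.esymm j * h₂ + (d + 1) * s.esymm (j + 2) * h₀)
    have hR : (d + 1) * (d + 2) * ((j + 1) * (d + 1 + 1) * s.esymm (j + 1) ^ 2)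
        = M ^ 2 * ((j + 1) * (d + 1) * t.esymm (j + 1) ^ 2) := by
      linear_combination
        (-(j + 1) * (d + 1) : ℝ) * (M * t.esymm (j + 1) + (d + 2) * s.esymm (j + 1)) * h₁
    refine le_of_mul_le_mul_left ?_ (by positivity : (0 : ℝ) < (d + 1) * (d + 2))
    rw [hL, hR]
    exact mul_le_mul_of_nonneg_left ih (sq_nonneg M)

theorem esymm_add_two_mul_esymm_le_sq (s : Multiset ℝ) (j : ℕ) :
    s.esymm (j + 2) * s.esymm j ≤ s.esymm (j + 1) ^ 2 := by
  obtain hlt | ⟨d, hd⟩ : card s < j + 2 ∨ ∃ d, card s = j + 2 + d :=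
    (lt_or_ge _ _).imp_right fun h => ⟨card s - (j + 2), by omega⟩
  · rw [esymm_eq_zero_of_card_lt s hlt, zero_mul]
    positivity
  rcases le_or_gt (s.esymm (j + 2) * s.esymm j) 0 with hneg | hpos
  · exact hneg.trans (sq_nonneg _)
  have hcoeff : ((j : ℝ) + 1) * (d + 1) ≤ (j + 2) * (d + 2) := by gcongr <;> norm_num
  refine le_of_mul_le_mul_left ?_ (by positivity : (0 : ℝ) < (j + 1) * (d + 1))
  calc ((j : ℝ) + 1) * (d + 1) * (s.esymm (j + 2) * s.esymm j)
      ≤ (j + 2) * (d + 2) * (s.esymm (j + 2) * s.esymm j) :=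
        mul_le_mul_of_nonneg_right hcoeff hpos.le
    _ ≤ (j + 1) * (d + 1) * s.esymm (j + 1) ^ 2 := by
        linarith [mul_esymm_add_two_mul_esymm_le s j d hd]

end Multiset

theorem esymm_eq_multiset_esymm (n k : ℕ) (x : Fin n → ℝ) :
    esymm n k x = (univ.val.map x).esymm k :=
  (esymm_map_val x univ k).symm

theorem esymmDel_eq_multiset_esymm (n k : ℕ) (x : Fin n → ℝ) (i : Fin n) :
    esymmDel n k x i = ((univ.erase i).val.map x).esymm k :=
  (esymm_map_val x _ k).symm

theorem esymm_succ_eq_esymmDel_add (n k : ℕ) (x : Fin n → ℝ) (i : Fin n) :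
    esymm n (k + 1) x = esymmDel n (k + 1) x i + x i * esymmDel n k x i := by
  rw [esymm_eq_multiset_esymm, esymmDel_eq_multiset_esymm, esymmDel_eq_multiset_esymm, erase_val,
    ← Multiset.esymm_cons_succ, ← Multiset.map_cons, Multiset.cons_erase (mem_univ i)]

theorem esymmDel_update (n k : ℕ) (x : Fin n → ℝ) (i : Fin n) (t : ℝ) :
    esymmDel n k (Function.update x i t) i = esymmDel n k x i := by
  simp only [esymmDel_eq_multiset_esymm]
  congr 1
  exact Multiset.map_congr rfl fun j hj =>
    Function.update_of_ne (ne_of_mem_erase (mem_val.mp hj)) _ _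

theorem hasDerivAt_esymm_update (n k : ℕ) (x : Fin n → ℝ) (i : Fin n) (t : ℝ) :
    HasDerivAt (fun s => esymm n (k + 1) (Function.update x i s)) (esymmDel n k x i) t := by
  simp only [esymm_succ_eq_esymmDel_add n k _ i, esymmDel_update, Function.update_self]
  exact (hasDerivAt_mul_const _).const_add _

theorem esymmDel_mul_esymm_sub_esymm_mul_esymmDel_nonneg (n j : ℕ) (x : Fin n → ℝ) (i : Fin n) :
    0 ≤ esymmDel n (j + 1) x i * esymm n (j + 1) x - esymm n (j + 2) x * esymmDel n j x i := by
  have h := Multiset.esymm_add_two_mul_esymm_le_sq ((univ.erase i).val.map x) j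
  simp only [← esymmDel_eq_multiset_esymm] at h
  rw [esymm_succ_eq_esymmDel_add n j x i, esymm_succ_eq_esymmDel_add n (j + 1) x i]
  linarith

theorem quotient_pderiv_general (n k : ℕ) (hk : 2 ≤ k)
    (μ : Fin n → ℝ) (hμ : μ ∈ Gamma n (k - 1)) (i : Fin n) :
    pdv n i (fun x => esymm n k x / esymm n (k - 1) x) μ =
      (esymmDel n (k - 1) μ i * esymm n (k - 1) μ - esymm n k μ * esymmDel n (k - 2) μ i) /
        (esymm n (k - 1) μ) ^ 2 ∧
    0 ≤ pdv n i (fun x => esymm n k x / esymm n (k - 1) x) μ := by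
  obtain ⟨j, rfl⟩ : ∃ j, k = j + 2 := ⟨k - 2, by omega⟩
  simp only [Nat.add_sub_cancel, show j + 2 - 1 = j + 1 by omega] at hμ ⊢
  have hden : esymm n (j + 1) μ ≠ 0 := (hμ (j + 1) (by omega) le_rfl).ne'
  have hderiv := (hasDerivAt_esymm_update n (j + 1) μ i (μ i)).div
    (hasDerivAt_esymm_update n j μ i (μ i)) (by rwa [Function.update_eq_self])
  rw [Function.update_eq_self] at hderiv
  have hpdv : pdv n i (fun x => esymm n (j + 2) x / esymm n (j + 1) x) μ = _ := hderiv.deriv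
  exact ⟨hpdv,
    hpdv ▸ div_nonneg (esymmDel_mul_esymm_sub_esymm_mul_esymmDel_nonneg n j μ i) (sq_nonneg _)⟩

/-- The partial derivative of sigma_k/sigma_{k-1} equals the stated quotient and is
nonnegative on Gamma_{k-1}. -/
theorem quotient_pderiv (n k : ℕ) (hk : 2 ≤ k) (hkn : k ≤ n)
    (μ : Fin n → ℝ) (hμ : μ ∈ Gamma n (k - 1)) (i : Fin n) :
    pdv n i (fun x => esymm n k x / esymm n (k - 1) x) μ =
      (esymmDel n (k - 1) μ i * esymm n (k - 1) μ - esymm n k μ * esymmDel n (k - 2) μ i) /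
        (esymm n (k - 1) μ) ^ 2 ∧
    0 ≤ pdv n i (fun x => esymm n k x / esymm n (k - 1) x) μ :=
  quotient_pderiv_general n k hk μ hμ i
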